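/- There is an absolute constant C > 0 such that for every r ∈ (1/2,1) the following holds. Let K := ⌊1/(4(1−r))⌋, a_j := r·e^{2πij(1−r)} for −K ≤ j ≤ K, and ψ_m(x) := ∑_{j=−K}^{m} Ψ_{a_j}(x) for −K ≤ m ≤ K. Then for all integers m, m' with −K ≤ m < m' ≤ K and every y ∈ [−π, π]: 0 < (ψ_{m'} − ψ_m)'(y) ≤ C/( (1−r)·(1 + dist(k(y), [m, m'])) ), where k(y) := ⌊y/(2π(1−r))⌋ and dist(k(y), [m, m']) := max(0, m − k(y), k(y) − m'). -/

import Mathlib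

open Real Set

noncomputable section

/-- The phase `Ψ_w` of the Möbius factor taking `w` to `0`. -/
def mobiusPhase (w : ℂ) (x : ℝ) : ℝ :=
  if w = 0 then x
  else
    x - Complex.arg w +
      2 * Real.arcsin (‖w‖ * Real.sin (x - Complex.arg w) /
        Real.sqrt (1 + ‖w‖ ^ 2 -
          2 * ‖w‖ * Real.cos (x - Complex.arg w)))

/-- The (two-sided) sequence `a_j = r e^{2πij(1-r)}`, `j ∈ ℤ`. -/
def aZ (r : ℝ) (j : ℤ) : ℂ :=
  (r : ℂ) * Complex.exp (((2 * Real.pi * (j : ℝ) * (1 - r) : ℝ) : ℂ) * Complex.I)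

/-- `k(x) = ⌊x/(2π(1-r))⌋`. -/
def kIdx (r x : ℝ) : ℤ := ⌊x / (2 * Real.pi * (1 - r))⌋

/-!
`Ψ_w' (x)` is the Poisson kernel `(1 - r²) / (1 + r² - 2r cos (x - arg w))` with `r = ‖w‖`, which
becomes visible after rewriting `arcsin (r sin u / √(1 + r² - 2r cos u))` as
`arctan (r sin u / (1 - r cos u))`. So `(ψ_{m'} - ψ_m)'(y)` is a sum of positive Poisson kernels
centred at `θ_j = 2πj(1 - r)`. Since `|y| ≤ π` and `|θ_j| ≤ π/2`, the angle `u = y - θ_j` stays in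
`[-3π/2, 3π/2]`, where `1 - cos u ≥ u²/23`; writing `s = y / (2π(1 - r))`, each term is therefore
at most `46 / ((1 - r) (1 + (j - s)²))`. Finally, a sum of `(1 + (j - s)²)⁻¹` over distinct integers
`j` with `|j - s| ≥ ρ` is at most `8 / (1 + ρ)`, by telescoping against `4 / (1 + x)` on each side
of `s`, and every `j ∈ (m, m']` satisfies `|j - s| ≥ dist(⌊s⌋, [m, m'])`.
-/

/-- Mathlib's `poissonKernel 0 (r * exp (θ * I)) (exp (x * I))`, as a function of `u = x - θ`. -/
def diskPoissonKernel (r u : ℝ) : ℝ :=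
  (1 - r ^ 2) / (1 + r ^ 2 - 2 * r * cos u)

lemma one_add_sq_sub_two_mul_cos (r u : ℝ) :
    1 + r ^ 2 - 2 * r * cos u = (1 - r * cos u) ^ 2 + (r * sin u) ^ 2 := by
  linear_combination r ^ 2 * (sin_sq_add_cos_sq u).symm

lemma one_sub_mul_cos_pos {r : ℝ} (hr : |r| < 1) (u : ℝ) : 0 < 1 - r * cos u := by
  have : r * cos u ≤ |r| := calc
    r * cos u ≤ |r| * |cos u| := (le_abs_self _).trans (abs_mul r _).le
    _ ≤ |r| := mul_le_of_le_one_right (abs_nonneg r) (abs_cos_le_one u)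
  linarith

lemma one_add_sq_sub_two_mul_cos_pos {r : ℝ} (hr : |r| < 1) (u : ℝ) :
    0 < 1 + r ^ 2 - 2 * r * cos u := by
  rw [one_add_sq_sub_two_mul_cos]
  have := one_sub_mul_cos_pos hr u
  positivity

lemma diskPoissonKernel_pos {r : ℝ} (hr : |r| < 1) (u : ℝ) : 0 < diskPoissonKernel r u := by
  have : r ^ 2 < 1 := by simpa using sq_lt_one_iff_abs_lt_one r |>.mpr hr
  exact div_pos (by linarith) (one_add_sq_sub_two_mul_cos_pos hr u)

lemma arcsin_sin_div_sqrt_eq_arctan {r : ℝ} (hr : |r| < 1) (u : ℝ) :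
    arcsin (r * sin u / √(1 + r ^ 2 - 2 * r * cos u)) = arctan (r * sin u / (1 - r * cos u)) := by
  have hM := one_sub_mul_cos_pos hr u
  rw [arctan_eq_arcsin]
  congr 1
  have : 1 + (r * sin u / (1 - r * cos u)) ^ 2
      = (1 + r ^ 2 - 2 * r * cos u) / (1 - r * cos u) ^ 2 := by
    rw [one_add_sq_sub_two_mul_cos]; field_simp
  rw [this, sqrt_div' _ (sq_nonneg _), sqrt_sq hM.le]
  field_simp

lemma hasDerivAt_arctan_sin_div {r : ℝ} (hr : |r| < 1) (u : ℝ) :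
    HasDerivAt (fun u => arctan (r * sin u / (1 - r * cos u)))
      (r * (cos u - r) / (1 + r ^ 2 - 2 * r * cos u)) u := by
  have hM := one_sub_mul_cos_pos hr u
  have h := (((hasDerivAt_sin u).const_mul r).fun_div
    ((hasDerivAt_cos u).const_mul r |>.const_sub 1) hM.ne').arctan
  convert h using 1
  rw [one_add_sq_sub_two_mul_cos]
  field_simp
  linear_combination r ^ 2 * sin_sq_add_cos_sq u

lemma hasDerivAt_mobiusPhase {w : ℂ} (hw0 : w ≠ 0) (hw1 : ‖w‖ < 1) (x : ℝ) :
    HasDerivAt (mobiusPhase w) (diskPoissonKernel ‖w‖ (x - Complex.arg w)) x := by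
  have hr : |‖w‖| < 1 := by rwa [abs_norm]
  have hphase : mobiusPhase w = fun x => x - Complex.arg w +
      2 * arctan (‖w‖ * sin (x - Complex.arg w) / (1 - ‖w‖ * cos (x - Complex.arg w))) := by
    funext x
    rw [mobiusPhase, if_neg hw0, arcsin_sin_div_sqrt_eq_arctan hr]
  have hshift := (hasDerivAt_id' x).sub_const (Complex.arg w)
  have h := hshift.add (((hasDerivAt_arctan_sin_div hr _).comp x hshift).const_mul 2)
  rw [hphase]
  refine h.congr_deriv ?_
  have := one_add_sq_sub_two_mul_cos_pos hr (x - Complex.arg w)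
  rw [diskPoissonKernel]
  field_simp
  ring

lemma norm_aZ {r : ℝ} (hr : 0 ≤ r) (j : ℤ) : ‖aZ r j‖ = r := by
  rw [aZ, norm_mul, Complex.norm_exp_ofReal_mul_I, mul_one, Complex.norm_real, norm_of_nonneg hr]

lemma aZ_ne_zero {r : ℝ} (hr : 0 < r) (j : ℤ) : aZ r j ≠ 0 := by
  rw [← norm_ne_zero_iff, norm_aZ hr.le]
  exact hr.ne'

lemma cos_sub_arg_aZ {r : ℝ} (hr : 0 < r) (j : ℤ) (x : ℝ) :
    cos (x - Complex.arg (aZ r j)) = cos (x - 2 * π * j * (1 - r)) := by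
  rw [cos_sub, Complex.cos_arg (aZ_ne_zero hr j), Complex.sin_arg, norm_aZ hr.le, cos_sub]
  simp only [aZ, Complex.re_ofReal_mul, Complex.im_ofReal_mul, Complex.exp_ofReal_mul_I_re,
    Complex.exp_ofReal_mul_I_im]
  field_simp

lemma hasDerivAt_mobiusPhase_aZ {r : ℝ} (hr0 : 0 < r) (hr1 : r < 1) (j : ℤ) (x : ℝ) :
    HasDerivAt (mobiusPhase (aZ r j)) (diskPoissonKernel r (x - 2 * π * j * (1 - r))) x := by
  have h := hasDerivAt_mobiusPhase (aZ_ne_zero hr0 j) (by rwa [norm_aZ hr0.le]) x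
  rwa [diskPoissonKernel, cos_sub_arg_aZ hr0, norm_aZ hr0.le] at h

lemma sq_div_le_one_sub_cos {u : ℝ} (hu : |u| ≤ 3 * π / 2) : u ^ 2 / 23 ≤ 1 - cos u := by
  have hπ : π ^ 2 < 10 := by nlinarith [pi_lt_d2, pi_pos]
  rcases le_or_gt |u| π with hle | hgt
  · have := cos_le_one_sub_mul_cos_sq hle
    have : u ^ 2 / 23 ≤ 2 / π ^ 2 * u ^ 2 := by
      rw [div_mul_eq_mul_div, div_le_div_iff₀ (by norm_num) (by positivity)]
      nlinarith [sq_nonneg u]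
    linarith
  · have : cos u ≤ 0 := by
      rw [← cos_abs]
      exact cos_nonpos_of_pi_div_two_le_of_le (by linarith [pi_pos]) (by linarith)
    have : u ^ 2 ≤ (3 * π / 2) ^ 2 := by
      rw [← sq_abs]; exact pow_le_pow_left₀ (abs_nonneg u) hu 2
    nlinarith

lemma diskPoissonKernel_le {r u : ℝ} (hr : 1 / 2 ≤ r) (hr1 : r < 1) (hu : |u| ≤ 3 * π / 2) :
    diskPoissonKernel r u ≤ 46 * (1 - r) / ((1 - r) ^ 2 + u ^ 2) := by
  have hcos := sq_div_le_one_sub_cos hu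
  -- `1 + r² - 2r cos u = (1 - r)² + 2r (1 - cos u)` and `2r ≥ 1`
  have hden : ((1 - r) ^ 2 + u ^ 2) / 23 ≤ 1 + r ^ 2 - 2 * r * cos u := by
    nlinarith [mul_nonneg (by linarith : 0 ≤ 2 * r - 1)
      (by linarith [cos_le_one u] : 0 ≤ 1 - cos u)]
  calc diskPoissonKernel r u ≤ 2 * (1 - r) / (((1 - r) ^ 2 + u ^ 2) / 23) :=
        div_le_div₀ (by linarith) (by nlinarith) (by positivity) hden
    _ = 46 * (1 - r) / ((1 - r) ^ 2 + u ^ 2) := by field_simp; ring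

lemma diskPoissonKernel_two_pi_mul_le {r t : ℝ} (hr : 1 / 2 ≤ r) (hr1 : r < 1)
    (ht : |2 * π * (1 - r) * t| ≤ 3 * π / 2) :
    diskPoissonKernel r (2 * π * (1 - r) * t) ≤ 46 / ((1 - r) * (1 + t ^ 2)) := by
  have hε : 0 < 1 - r := by linarith
  refine (diskPoissonKernel_le hr hr1 ht).trans ?_
  rw [div_le_div_iff₀ (by positivity) (by positivity)]
  have : 1 ≤ (2 * π) ^ 2 := by nlinarith [pi_gt_three]
  nlinarith [mul_nonneg (mul_nonneg hε.le (sq_nonneg (1 - r))) (sq_nonneg t)]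

/-- The telescoping step: `4 / (1 + x) - 4 / (2 + x)` dominates `(1 + x²)⁻¹`. -/
lemma inv_one_add_sq_add_le {x : ℝ} (hx : 0 ≤ x) :
    (1 + x ^ 2)⁻¹ + 4 / (2 + x) ≤ 4 / (1 + x) := by
  rw [inv_eq_one_div, div_add_div _ _ (by positivity) (by positivity),
    div_le_div_iff₀ (by positivity) (by positivity)]
  nlinarith [sq_nonneg (x - 1), mul_nonneg hx (sq_nonneg x)]

lemma sum_inv_one_add_sq_le_of_le_sub (S : Finset ℤ) (s : ℝ) {ρ : ℝ} (hρ : 0 ≤ ρ)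
    (hS : ∀ j ∈ S, ρ ≤ j - s) : ∑ j ∈ S, (1 + (j - s) ^ 2)⁻¹ ≤ 4 / (1 + ρ) := by
  induction S using Finset.induction_on_min generalizing ρ with
  | empty => simp; positivity
  | insert a S haS ih =>
    have ha := hS a (Finset.mem_insert_self a S)
    have hrest : ∑ j ∈ S, (1 + (j - s) ^ 2)⁻¹ ≤ 4 / (1 + (a + 1 - s)) := by
      refine ih (by linarith) fun j hj => ?_
      have : (a : ℝ) + 1 ≤ j := by exact_mod_cast haS j hj
      linarith
    rw [Finset.sum_insert fun h => lt_irrefl a (haS a h)]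
    calc (1 + (a - s) ^ 2)⁻¹ + ∑ j ∈ S, (1 + (j - s) ^ 2)⁻¹
        ≤ (1 + (a - s) ^ 2)⁻¹ + 4 / (2 + (a - s)) := by
          rw [show 2 + ((a : ℝ) - s) = 1 + (a + 1 - s) by ring]
          linarith
      _ ≤ 4 / (1 + (a - s)) := inv_one_add_sq_add_le (by linarith)
      _ ≤ 4 / (1 + ρ) := by gcongr

lemma sum_inv_one_add_sq_le_of_le_abs_sub (S : Finset ℤ) (s : ℝ) {ρ : ℝ} (hρ : 0 ≤ ρ)
    (hS : ∀ j ∈ S, ρ ≤ |j - s|) : ∑ j ∈ S, (1 + (j - s) ^ 2)⁻¹ ≤ 8 / (1 + ρ) := by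
  rw [← Finset.sum_filter_add_sum_filter_not S (fun j : ℤ => s ≤ (j : ℝ))]
  have hright : ∑ j ∈ S with s ≤ (j : ℤ), (1 + (j - s) ^ 2)⁻¹ ≤ 4 / (1 + ρ) := by
    refine sum_inv_one_add_sq_le_of_le_sub _ s hρ fun j hj => ?_
    rw [Finset.mem_filter] at hj
    simpa [abs_of_nonneg (sub_nonneg.2 hj.2)] using hS j hj.1
  have hleft : ∑ j ∈ S with ¬s ≤ (j : ℤ), (1 + (j - s) ^ 2)⁻¹ ≤ 4 / (1 + ρ) := by
    have h := sum_inv_one_add_sq_le_of_le_sub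
      ((S.filter fun j : ℤ => ¬s ≤ (j : ℝ)).image (- ·)) (-s) hρ (by
        simp only [Finset.mem_image, Finset.mem_filter, not_le]
        rintro _ ⟨j, ⟨hjS, hjs⟩, rfl⟩
        have := hS j hjS
        rw [abs_of_neg (sub_neg.2 hjs)] at this
        push_cast; linarith)
    rw [Finset.sum_image fun _ _ _ _ h => neg_injective h] at h
    convert h using 2 with j
    push_cast; ring
  linarith [hright, hleft, show 4 / (1 + ρ) + 4 / (1 + ρ) = 8 / (1 + ρ) by ring]

lemma abs_intCast_le_of_mem_Icc_neg {j K : ℤ} (hj : j ∈ Finset.Icc (-K) K) {x : ℝ}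
    (hK : (K : ℝ) ≤ x) : |(j : ℝ)| ≤ x := by
  rw [Finset.mem_Icc] at hj
  have hlo : -(K : ℝ) ≤ j := by exact_mod_cast hj.1
  have hhi : (j : ℝ) ≤ K := by exact_mod_cast hj.2
  exact abs_le.2 ⟨by linarith, by linarith⟩

lemma cast_dist_Icc_le_abs_sub {m m' j : ℤ} (hj : j ∈ Finset.Icc (m + 1) m') (s : ℝ) :
    ((max 0 (max (m - ⌊s⌋) (⌊s⌋ - m')) : ℤ) : ℝ) ≤ |j - s| := by
  rw [Finset.mem_Icc] at hj
  have hlo : (m : ℝ) + 1 ≤ j := by exact_mod_cast hj.1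
  have hhi : (j : ℝ) ≤ m' := by exact_mod_cast hj.2
  have := Int.floor_le s
  have := Int.lt_floor_add_one s
  push_cast
  refine max_le (abs_nonneg _) (max_le ?_ ?_)
  · linarith [le_abs_self ((j : ℝ) - s)]
  · linarith [neg_abs_le ((j : ℝ) - s)]

lemma diskPoissonKernel_sub_le {r y : ℝ} {j : ℤ} (hr : 1 / 2 ≤ r) (hr1 : r < 1) (hy : |y| ≤ π)
    (hj : |(j : ℝ)| ≤ 1 / (4 * (1 - r))) :
    diskPoissonKernel r (y - 2 * π * j * (1 - r))
      ≤ 46 / (1 - r) * (1 + (j - y / (2 * π * (1 - r))) ^ 2)⁻¹ := by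
  have hε : 0 < 1 - r := by linarith
  have hscale : y - 2 * π * j * (1 - r) = 2 * π * (1 - r) * (y / (2 * π * (1 - r)) - j) := by
    field_simp
  have hθ : |2 * π * j * (1 - r)| ≤ π / 2 := calc
    |2 * π * j * (1 - r)| = 2 * π * (1 - r) * |(j : ℝ)| := by
      rw [abs_mul, abs_mul, abs_of_pos (by positivity : 0 < 2 * π), abs_of_pos hε]; ring
    _ ≤ 2 * π * (1 - r) * (1 / (4 * (1 - r))) := by gcongr
    _ = π / 2 := by field_simp; ring
  have hu : |y - 2 * π * j * (1 - r)| ≤ 3 * π / 2 := by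
    linarith [abs_sub y (2 * π * j * (1 - r))]
  rw [hscale] at hu ⊢
  refine (diskPoissonKernel_two_pi_mul_le hr hr1 hu).trans_eq ?_
  field_simp
  ring

/-- Derivative bound for the phase differences `(ψ_{m'} - ψ_m)'`,
where `(ψ_{m'} - ψ_m)(y) = ∑_{j=m+1}^{m'} Ψ_{a_j}(y)`. -/
theorem psi_difference_deriv_bound :
    ∃ C : ℝ, 0 < C ∧
      ∀ r : ℝ, 1 / 2 < r → r < 1 →
        ∀ m m' : ℤ, -⌊1 / (4 * (1 - r))⌋ ≤ m → m < m' → m' ≤ ⌊1 / (4 * (1 - r))⌋ →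
          ∀ y ∈ Set.Icc (-Real.pi) Real.pi,
            0 < deriv (fun t => ∑ j ∈ Finset.Icc (m + 1) m', mobiusPhase (aZ r j) t) y ∧
              deriv (fun t => ∑ j ∈ Finset.Icc (m + 1) m', mobiusPhase (aZ r j) t) y
                ≤ C / ((1 - r) *
                    (1 + ((max 0 (max (m - kIdx r y) (kIdx r y - m')) : ℤ) : ℝ))) := by
  refine ⟨368, by norm_num, fun r hr hr1 m m' hm hmm' hm' y hy => ?_⟩
  have hderiv : HasDerivAt (fun t => ∑ j ∈ Finset.Icc (m + 1) m', mobiusPhase (aZ r j) t)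
      (∑ j ∈ Finset.Icc (m + 1) m', diskPoissonKernel r (y - 2 * π * j * (1 - r))) y :=
    HasDerivAt.fun_sum fun j _ => hasDerivAt_mobiusPhase_aZ (by linarith) hr1 j y
  rw [hderiv.deriv]
  refine ⟨Finset.sum_pos (fun j _ => diskPoissonKernel_pos (abs_lt.2 ⟨by linarith, hr1⟩) _)
    (Finset.nonempty_Icc.2 (by omega)), ?_⟩
  have hj : ∀ j ∈ Finset.Icc (m + 1) m', |(j : ℝ)| ≤ 1 / (4 * (1 - r)) := fun j hj =>
    abs_intCast_le_of_mem_Icc_neg (by rw [Finset.mem_Icc] at hj ⊢; omega) (Int.floor_le _)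
  set s := y / (2 * π * (1 - r))
  calc ∑ j ∈ Finset.Icc (m + 1) m', diskPoissonKernel r (y - 2 * π * j * (1 - r))
      ≤ ∑ j ∈ Finset.Icc (m + 1) m', 46 / (1 - r) * (1 + (j - s) ^ 2)⁻¹ :=
        Finset.sum_le_sum fun j hjm =>
          diskPoissonKernel_sub_le hr.le hr1 (abs_le.2 ⟨hy.1, hy.2⟩) (hj j hjm)
    _ = 46 / (1 - r) * ∑ j ∈ Finset.Icc (m + 1) m', (1 + (j - s) ^ 2)⁻¹ := by
        rw [Finset.mul_sum]
    _ ≤ 46 / (1 - r) * (8 / (1 + ((max 0 (max (m - kIdx r y) (kIdx r y - m')) : ℤ) : ℝ))) := by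
        gcongr
        exact sum_inv_one_add_sq_le_of_le_abs_sub _ s (by positivity)
          fun j hj => cast_dist_Icc_le_abs_sub hj s
    _ = _ := by rw [div_mul_div_comm]; norm_num
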